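/- arXiv:1311.4748 — 3 statements merged into one kernel-verified Lean document; each statement's English description precedes it below -/
import Mathlib

section
/- For every d ≥ 1 and every N ≥ d, the set of full spark frames in 𝓕_{N,d}^ℂ is generic in 𝓕_{N,d}^ℂ: it contains a subset that is both open and dense in 𝓕_{N,d}^ℂ with the subspace topology induced from the space of d×N complex matrices. -/
noncomputable section

/-- The set of finite unit norm tight frames (FUNTFs) of `N` vectors in `𝕜^d`,
viewed as `d × N` matrices `F` with unit-norm columns and `F * Fᴴ = (N/d) • 1`. -/
def FUNTF (𝕜 : Type*) [RCLike 𝕜] (N d : ℕ) : Set (Matrix (Fin d) (Fin N) 𝕜) :=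
  {F | F * F.conjTranspose = ((N : 𝕜) / (d : 𝕜)) • 1 ∧
       ∀ n, (F.conjTranspose * F) n n = 1}

/-- A `d × N` matrix is full spark if every `d` of its columns are linearly independent. -/
def FullSpark {𝕜 : Type*} [RCLike 𝕜] {m n : ℕ} (F : Matrix (Fin m) (Fin n) 𝕜) : Prop :=
  ∀ s : Finset (Fin n), s.card = m →
    LinearIndependent 𝕜 (fun j : s => (fun i => F i (j : Fin n)))

/-!
Full spark is an open condition, a finite conjunction of linear independence conditions. For
density, take a FUNTF `F` in an open set `W` whose family of independent column index sets is
maximal among the FUNTFs in `W`. If `F` is not full spark, some column `f m` lies in the span of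
an independent family `f '' I` whose span misses some other column `f n`. Rotating the pair
`(f m, f n)` by a small unitary, with its phase chosen so that the column norms stay `1`, keeps
`F` a FUNTF in `W` and keeps every independent set independent, while `insert m I` becomes
independent, contradicting maximality.
-/

open Matrix Submodule Set Filter Topology

section LinearAlgebra

variable {ι K V : Type*} [Field K] [AddCommGroup V] [Module K V]

theorem exists_linearIndepOn_mem_span_notMem_span [FiniteDimensional K V] {v : ι → V}
    (hv : span K (range v) = ⊤) {s : Finset ι} (hs : s.card = Module.finrank K V)
    (hdep : ¬LinearIndepOn K v s) :
    ∃ (I : Set ι) (m n : ι), LinearIndepOn K v I ∧ m ∉ I ∧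
      v m ∈ span K (v '' I) ∧ v n ∉ span K (v '' I) := by
  obtain ⟨I, hIs, -, hsI, hI⟩ :=
    exists_linearIndepOn_extension (linearIndepOn_empty K v) (empty_subset (s : Set ι))
  obtain ⟨m, hms, hmI⟩ : ∃ m ∈ s, m ∉ I := by
    by_contra! h
    exact hdep (hI.mono h)
  have hI_ne_top : span K (v '' I) ≠ ⊤ := by
    intro htop
    refine hdep (linearIndependent_of_top_le_span_of_card_eq_finrank ?_ (by simpa using hs))
    rw [← image_eq_range, ← htop]
    exact span_mono (image_mono hIs)
  obtain ⟨n, hn⟩ : ∃ n, v n ∉ span K (v '' I) := by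
    by_contra! h
    exact hI_ne_top (eq_top_iff.2 (hv ▸ span_le.2 (range_subset_iff.2 h)))
  exact ⟨I, m, n, hI, hmI, hsI (mem_image_of_mem v hms), hn⟩

theorem LinearIndepOn.insert_of_eq_add_smul {v w : ι → V} {I : Set ι} {m n : ι} {a b : K}
    (hI : LinearIndepOn K v I) (hvw : EqOn v w I) (hmI : m ∉ I)
    (hvm : v m ∈ span K (v '' I)) (hvn : v n ∉ span K (v '' I))
    (hwm : w m = a • v m + b • v n) (hb : b ≠ 0) : LinearIndepOn K w (insert m I) := by
  rw [linearIndepOn_insert hmI, ← hvw.image_eq, hwm]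
  refine ⟨hI.congr hvw, fun h => hvn ?_⟩
  have hbvn := sub_mem h (smul_mem _ a hvm)
  rw [add_sub_cancel_left] at hbvn
  exact (smul_mem_iff _ hb).1 hbvn

end LinearAlgebra

section Columns

variable {ι κ : Type*}

theorem span_range_col_eq_top [Fintype ι] [Fintype κ] [DecidableEq ι] {K : Type*} [Field K]
    [Star K] {F : Matrix ι κ K} {c : K} (hc : c ≠ 0) (hF : F * Fᴴ = c • 1) :
    span K (range F.col) = ⊤ := by
  refine eq_top_iff.2 fun y _ => ?_
  have hy : y = F *ᵥ (c⁻¹ • Fᴴ *ᵥ y) := by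
    rw [mulVec_smul, mulVec_mulVec, hF, smul_mulVec, one_mulVec, smul_smul, inv_mul_cancel₀ hc,
      one_smul]
  rw [hy, ← range_mulVecLin]
  exact LinearMap.mem_range_self _ _

def indepSets {𝕜 : Type*} [Field 𝕜] (F : Matrix ι κ 𝕜) : Set (Set κ) :=
  {J | LinearIndepOn 𝕜 F.col J}

variable {𝕜 : Type*} [NontriviallyNormedField 𝕜] [CompleteSpace 𝕜] [Fintype ι]

theorem isOpen_setOf_linearIndepOn_col (J : Set κ) [Finite J] :
    IsOpen {F : Matrix ι κ 𝕜 | LinearIndepOn 𝕜 F.col J} := by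
  have hcols : Continuous fun F : Matrix ι κ 𝕜 => fun j : J => F.col j :=
    continuous_pi fun j => continuous_pi fun i => continuous_apply_apply i (j : κ)
  exact isOpen_setOfPred_linearIndependent.preimage hcols

theorem eventually_indepSets_subset [Finite κ] (F : Matrix ι κ 𝕜) :
    ∀ᶠ G in 𝓝 F, indepSets F ⊆ indepSets G := by
  refine eventually_all.2 fun J => ?_
  by_cases hJ : J ∈ indepSets F
  · exact eventually_of_mem ((isOpen_setOf_linearIndepOn_col J).mem_nhds hJ) fun _ hG _ => hG
  · exact Eventually.of_forall fun _ hJ' => absurd hJ' hJ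

end Columns

theorem isOpen_setOf_fullSpark {𝕜 : Type*} [RCLike 𝕜] {m n : ℕ} :
    IsOpen {F : Matrix (Fin m) (Fin n) 𝕜 | FullSpark F} := by
  simp only [FullSpark, ofPred_forall]
  exact isOpen_iInter_of_finite fun s => isOpen_iInter_of_finite fun _ =>
    isOpen_setOf_linearIndepOn_col (s : Set (Fin n))

section Rotation

open Complex ComplexConjugate

variable {ι κ : Type*} [DecidableEq κ]

theorem mul_conjTranspose_eq_of_col_eq [Fintype κ] {α : Type*} [Semiring α] [StarRing α]
    {F G : Matrix ι κ α} {m n : κ} (hmn : m ≠ n) (hcols : ∀ j, j ≠ m → j ≠ n → G.col j = F.col j)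
    (hpair : ∀ i k, G.col m i * star (G.col m k) + G.col n i * star (G.col n k) =
      F.col m i * star (F.col m k) + F.col n i * star (F.col n k)) :
    G * Gᴴ = F * Fᴴ := by
  ext i k
  simp only [mul_apply, conjTranspose_apply, ← col_apply G, ← col_apply F]
  rw [← Finset.sum_add_sum_compl {m, n}, ← Finset.sum_add_sum_compl {m, n} (fun j => F.col j i * _),
    Finset.sum_pair hmn, Finset.sum_pair hmn, hpair]
  congr 1
  refine Finset.sum_congr rfl fun j hj => ?_
  simp only [Finset.mem_compl, Finset.mem_insert, Finset.mem_singleton, not_or] at hj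
  rw [hcols j hj.1 hj.2]

/-- `F * R`, where `R` is the identity except for the unitary block
`!![cos θ, i sin θ • u; i sin θ • conj u, cos θ]` in rows and columns `m, n`. -/
def rotateCols (F : Matrix ι κ ℂ) (m n : κ) (u : ℂ) (θ : ℝ) : Matrix ι κ ℂ :=
  (F.updateCol m ((Real.cos θ : ℂ) • F.col m + (I * Real.sin θ * conj u) • F.col n)).updateCol n
    ((I * Real.sin θ * u) • F.col m + (Real.cos θ : ℂ) • F.col n)

variable {F : Matrix ι κ ℂ} {m n : κ} {u : ℂ} {θ : ℝ}

theorem col_rotateCols_left (hmn : m ≠ n) :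
    (rotateCols F m n u θ).col m =
      (Real.cos θ : ℂ) • F.col m + (I * Real.sin θ * conj u) • F.col n := by
  funext i
  simp [rotateCols, hmn]

theorem col_rotateCols_right :
    (rotateCols F m n u θ).col n = (I * Real.sin θ * u) • F.col m + (Real.cos θ : ℂ) • F.col n := by
  funext i
  simp [rotateCols]

theorem col_rotateCols_of_ne {j : κ} (hjm : j ≠ m) (hjn : j ≠ n) :
    (rotateCols F m n u θ).col j = F.col j := by
  funext i
  simp [rotateCols, hjm, hjn]

variable (F m n u) in
theorem rotateCols_zero : rotateCols F m n u 0 = F := by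
  ext i j
  simp only [rotateCols, updateCol_apply, Real.cos_zero, Real.sin_zero]
  split_ifs <;> simp_all

variable (F m n u) in
theorem continuous_rotateCols : Continuous (rotateCols F m n u) := by
  unfold rotateCols
  fun_prop

theorem rotateCols_mul_conjTranspose [Fintype κ] (hmn : m ≠ n) (hu : conj u * u = 1) :
    rotateCols F m n u θ * (rotateCols F m n u θ)ᴴ = F * Fᴴ := by
  refine mul_conjTranspose_eq_of_col_eq hmn (fun j => col_rotateCols_of_ne) fun i k => ?_
  rw [col_rotateCols_left hmn, col_rotateCols_right]
  have hcs : (Real.cos θ : ℂ) ^ 2 + (Real.sin θ : ℂ) ^ 2 = 1 := mod_cast Real.cos_sq_add_sin_sq θ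
  simp only [Pi.add_apply, Pi.smul_apply, smul_eq_mul, col_apply, star_add, star_mul', star_def,
    conj_ofReal, conj_I, conj_conj]
  set A := F i m * conj (F k m) + F i n * conj (F k n)
  linear_combination A * hcs + (Real.sin θ : ℂ) ^ 2 * A * hu
    - (Real.sin θ : ℂ) ^ 2 * conj u * u * A * I_sq

theorem conjTranspose_mul_rotateCols_diag [Fintype ι] (hmn : m ≠ n) (hu : conj u * u = 1)
    (hnorm : (Fᴴ * F) m m = (Fᴴ * F) n n) (hg : conj u * (Fᴴ * F) m n = u * conj ((Fᴴ * F) m n))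
    (j : κ) : ((rotateCols F m n u θ)ᴴ * rotateCols F m n u θ) j j = (Fᴴ * F) j j := by
  have gram (G : Matrix ι κ ℂ) (j k : κ) : (Gᴴ * G) j k = star (G.col j) ⬝ᵥ G.col k := rfl
  have hswap : (Fᴴ * F) n m = conj ((Fᴴ * F) m n) := by rw [gram, gram, star_dotProduct]; rfl
  have hcs : (Real.cos θ : ℂ) ^ 2 + (Real.sin θ : ℂ) ^ 2 = 1 := mod_cast Real.cos_sq_add_sin_sq θ
  by_cases hjm : j = m
  · subst hjm
    rw [gram, col_rotateCols_left hmn]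
    simp only [star_add, star_smul, add_dotProduct, dotProduct_add, smul_dotProduct,
      dotProduct_smul, smul_eq_mul, ← gram, hswap, star_def, map_mul, conj_ofReal, conj_I,
      conj_conj]
    linear_combination (Fᴴ * F) j j * hcs + (Real.sin θ : ℂ) ^ 2 * (Fᴴ * F) n n * hu
      - (Real.sin θ : ℂ) ^ 2 * hnorm + I * Real.cos θ * Real.sin θ * hg
      - (Real.sin θ : ℂ) ^ 2 * u * conj u * (Fᴴ * F) n n * I_sq
  by_cases hjn : j = n
  · subst hjn
    rw [gram, col_rotateCols_right]
    simp only [star_add, star_smul, add_dotProduct, dotProduct_add, smul_dotProduct,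
      dotProduct_smul, smul_eq_mul, ← gram, hswap, star_def, map_mul, conj_ofReal, conj_I]
    linear_combination (Fᴴ * F) j j * hcs + (Real.sin θ : ℂ) ^ 2 * (Fᴴ * F) m m * hu
      + (Real.sin θ : ℂ) ^ 2 * hnorm - I * Real.cos θ * Real.sin θ * hg
      - (Real.sin θ : ℂ) ^ 2 * u * conj u * (Fᴴ * F) m m * I_sq
  rw [gram, gram, col_rotateCols_of_ne hjm hjn]

end Rotation

section Frames

open Complex ComplexConjugate

theorem exists_conj_mul_self_eq_one_conj_mul_eq (g : ℂ) :
    ∃ u : ℂ, conj u * u = 1 ∧ conj u * g = u * conj g := by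
  set u := exp (arg g * I)
  have hu : conj u * u = 1 := by rw [conj_mul', norm_exp_ofReal_mul_I, ofReal_one, one_pow]
  have hg : g = ‖g‖ * u := (norm_mul_exp_arg_mul_I g).symm
  refine ⟨u, hu, ?_⟩
  rw [hg, map_mul, conj_ofReal]
  ring

variable {N d : ℕ}

theorem rotateCols_mem_FUNTF {F : Matrix (Fin d) (Fin N) ℂ} (hF : F ∈ FUNTF ℂ N d) {m n : Fin N}
    (hmn : m ≠ n) {u : ℂ} (hu : conj u * u = 1)
    (hg : conj u * (Fᴴ * F) m n = u * conj ((Fᴴ * F) m n)) (θ : ℝ) :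
    rotateCols F m n u θ ∈ FUNTF ℂ N d :=
  ⟨(rotateCols_mul_conjTranspose hmn hu).trans hF.1, fun j =>
    (conjTranspose_mul_rotateCols_diag hmn hu (by rw [hF.2, hF.2]) hg j).trans (hF.2 j)⟩

theorem exists_mem_FUNTF_indepSets_ssubset {F : Matrix (Fin d) (Fin N) ℂ} (hF : F ∈ FUNTF ℂ N d)
    (hFS : ¬FullSpark F) {W : Set (Matrix (Fin d) (Fin N) ℂ)} (hW : W ∈ 𝓝 F) :
    ∃ G ∈ W ∩ FUNTF ℂ N d, indepSets F ⊂ indepSets G := by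
  obtain ⟨s, hs, hdep⟩ : ∃ s : Finset (Fin N), s.card = d ∧ ¬LinearIndepOn ℂ F.col s := by
    unfold FullSpark at hFS
    push Not at hFS
    exact hFS
  have hd : d ≠ 0 := by
    rintro rfl
    exact hdep (by simp [Finset.card_eq_zero.1 hs])
  have hN : N ≠ 0 := by
    have := s.card_le_univ
    simp only [Fintype.card_fin] at this
    omega
  have hspan := span_range_col_eq_top (c := (N : ℂ) / d) (by simp [hd, hN]) hF.1
  obtain ⟨I, m, n, hI, hmI, hm, hn⟩ :=
    exists_linearIndepOn_mem_span_notMem_span hspan (by simpa using hs) hdep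
  have hmn : m ≠ n := by
    rintro rfl
    exact hn hm
  have hnI : n ∉ I := fun h => hn (subset_span (mem_image_of_mem _ h))
  obtain ⟨u, hu, hg⟩ := exists_conj_mul_self_eq_one_conj_mul_eq ((Fᴴ * F) m n)
  have hnear : ∀ᶠ θ in 𝓝 0,
      rotateCols F m n u θ ∈ W ∧ indepSets F ⊆ indepSets (rotateCols F m n u θ) := by
    have hcont := (continuous_rotateCols F m n u).tendsto 0
    rw [rotateCols_zero] at hcont
    exact hcont.eventually ((eventually_mem_set.2 hW).and (eventually_indepSets_subset F))
  obtain ⟨θ, ⟨hθW, hsub⟩, hθ, hθπ⟩ :=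
    ((hnear.filter_mono nhdsWithin_le_nhds).and (Ioo_mem_nhdsGT Real.pi_pos)).exists
  refine ⟨rotateCols F m n u θ, ⟨hθW, rotateCols_mem_FUNTF hF hmn hu hg θ⟩,
    (ssubset_iff_of_subset hsub).2 ⟨insert m I, ?_, fun h => ((linearIndepOn_insert hmI).1 h).2 hm⟩⟩
  have hsin : (Real.sin θ : ℂ) ≠ 0 := ofReal_ne_zero.2 (Real.sin_pos_of_pos_of_lt_pi hθ hθπ).ne'
  have hu0 : conj u ≠ 0 := by
    rintro h
    simp [h] at hu
  refine hI.insert_of_eq_add_smul (fun j hj => ?_) hmI hm hn (col_rotateCols_left hmn)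
    (mul_ne_zero (mul_ne_zero I_ne_zero hsin) hu0)
  exact (col_rotateCols_of_ne (ne_of_mem_of_not_mem hj hmI) (ne_of_mem_of_not_mem hj hnI)).symm

theorem FUNTF_subset_closure_fullSpark :
    FUNTF ℂ N d ⊆ closure (FUNTF ℂ N d ∩ {F | FullSpark F}) := by
  intro F hF
  rw [_root_.mem_closure_iff]
  intro W hW hFW
  obtain ⟨G, ⟨hGW, hG⟩, hmax⟩ :=
    Set.Finite.exists_maximalFor' indepSets (W ∩ FUNTF ℂ N d) (toFinite _) ⟨F, hFW, hF⟩
  refine ⟨G, hGW, hG, by_contra fun hGS => ?_⟩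
  obtain ⟨G', hG', hlt⟩ := exists_mem_FUNTF_indepSets_ssubset hG hGS (hW.mem_nhds hGW)
  exact hlt.2 (hmax hG' hlt.1)

end Frames

theorem fullSpark_generic_complex_general (N d : ℕ) :
    ∃ U : Set (FUNTF ℂ N d), IsOpen U ∧ Dense U ∧ ∀ F ∈ U, FullSpark (F : Matrix (Fin d) (Fin N) ℂ) := by
  refine ⟨Subtype.val ⁻¹' {F | FullSpark F}, isOpen_setOf_fullSpark.preimage continuous_subtype_val,
    ?_, fun _ hF => hF⟩
  rw [Subtype.dense_iff, Subtype.image_preimage_coe]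
  exact FUNTF_subset_closure_fullSpark

/-- For every `d ≥ 1` and `N ≥ d`, the full spark frames are generic in `𝓕_{N,d}^ℂ`:
they contain a subset that is open and dense in the subspace topology. -/
theorem fullSpark_generic_complex (N d : ℕ) (hd : 1 ≤ d) (hN : d ≤ N) :
    ∃ U : Set (FUNTF ℂ N d), IsOpen U ∧ Dense U ∧ ∀ F ∈ U, FullSpark (F : Matrix (Fin d) (Fin N) ℂ) :=
  fullSpark_generic_complex_general N d
end
end

section
/- Let 𝔽 = ℝ or ℂ, let 1 ≤ d < N, let F = (f_1, …, f_N) be a Parseval frame in 𝔽^d, and let G = (g_1, …, g_N) be a Naimark complement of F in 𝔽^{N−d}. Then F is orthodecomposable if and only if G is orthodecomposable. -/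
noncomputable section

/-- The `j`-th column of a matrix, as a vector in Euclidean space. -/
def col {𝕜 : Type*} [RCLike 𝕜] {m n : ℕ} (F : Matrix (Fin m) (Fin n) 𝕜) (j : Fin n) :
    EuclideanSpace 𝕜 (Fin m) :=
  (WithLp.equiv 2 (Fin m → 𝕜)).symm fun i => F i j

/-- A family of vectors is orthodecomposable (OD) if the index set admits a partition into
two nonempty sets `S`, `T` such that the span of the vectors indexed by `S` is the orthogonal
complement of the span of the vectors indexed by `T`. -/
def Orthodecomposable (𝕜 : Type*) [RCLike 𝕜] {E : Type*} [NormedAddCommGroup E]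
    [InnerProductSpace 𝕜 E] {ι : Type*} (f : ι → E) : Prop :=
  ∃ S T : Set ι, S.Nonempty ∧ T.Nonempty ∧ Disjoint S T ∧ S ∪ T = Set.univ ∧
    Submodule.span 𝕜 (f '' S) = (Submodule.span 𝕜 (f '' T))ᗮ

/-! The columns of a Parseval frame span the space, so a partition `S ∪ T` makes the frame
orthodecomposable exactly when the Gram entries `(Fᴴ F) s t` with `s ∈ S`, `t ∈ T` vanish.
Since `Fᴴ F + Gᴴ G = 1`, the off-diagonal Gram entries of `F` and of `G` are negatives of each
other, so the same partitions work for both. -/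

open scoped InnerProductSpace Matrix

section Orthodecomposable

variable {𝕜 E : Type*} [RCLike 𝕜] [NormedAddCommGroup E] [InnerProductSpace 𝕜 E]

theorem Submodule.IsOrtho.eq_orthogonal_of_sup_eq_top {U V : Submodule 𝕜 E} (hUV : U ⟂ V)
    (hsup : U ⊔ V = ⊤) : U = Vᗮ := by
  refine le_antisymm hUV fun x hx => ?_
  obtain ⟨u, hu, v, hv, rfl⟩ := Submodule.mem_sup.mp (hsup ▸ Submodule.mem_top : x ∈ U ⊔ V)
  have hv' : v ∈ Vᗮ := by simpa using Vᗮ.sub_mem hx (hUV hu)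
  have hv0 : v = 0 := by simpa [V.inf_orthogonal_eq_bot] using Submodule.mem_inf.mpr ⟨hv, hv'⟩
  simpa [hv0] using hu

theorem orthodecomposable_iff_of_span_eq_top {ι : Type*} {f : ι → E}
    (hf : Submodule.span 𝕜 (Set.range f) = ⊤) :
    Orthodecomposable 𝕜 f ↔ ∃ S T : Set ι, S.Nonempty ∧ T.Nonempty ∧ Disjoint S T ∧
      S ∪ T = Set.univ ∧ ∀ s ∈ S, ∀ t ∈ T, ⟪f s, f t⟫_𝕜 = 0 := by
  refine exists₂_congr fun S T => and_congr_right' <| and_congr_right' <| and_congr_right' <|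
    and_congr_right fun hST => ?_
  have hsup : Submodule.span 𝕜 (f '' S) ⊔ Submodule.span 𝕜 (f '' T) = ⊤ := by
    rw [← Submodule.span_union, ← Set.image_union, hST, Set.image_univ, hf]
  have hortho : Submodule.span 𝕜 (f '' S) ⟂ Submodule.span 𝕜 (f '' T) ↔
      ∀ s ∈ S, ∀ t ∈ T, ⟪f s, f t⟫_𝕜 = 0 := by
    simp only [Submodule.isOrtho_span, Set.forall_mem_image]
  rw [← hortho]
  exact ⟨fun h => h ▸ Submodule.isOrtho_orthogonal_left _,
    fun h => h.eq_orthogonal_of_sup_eq_top hsup⟩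

end Orthodecomposable

section Columns

variable {𝕜 : Type*} [RCLike 𝕜] {m n : ℕ}

theorem inner_col_col (M : Matrix (Fin m) (Fin n) 𝕜) (s t : Fin n) :
    ⟪col M s, col M t⟫_𝕜 = (Mᴴ * M) s t := by
  simp [col, PiLp.inner_apply, Matrix.mul_apply, mul_comm]

theorem span_range_col_eq_top_s8 {M : Matrix (Fin m) (Fin n) 𝕜} (hM : M * Mᴴ = 1) :
    Submodule.span 𝕜 (Set.range (col M)) = ⊤ := by
  have hsurj : Function.Surjective M.mulVecLin := fun x =>
    ⟨Mᴴ *ᵥ x, by rw [Matrix.mulVecLin_apply, Matrix.mulVec_mulVec, hM, Matrix.one_mulVec]⟩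
  have hcol : col M = (WithLp.linearEquiv 2 𝕜 (Fin m → 𝕜)).symm ∘ M.col := rfl
  rw [hcol, Set.range_comp, ← LinearEquiv.coe_toLinearMap, Submodule.span_image,
    ← Matrix.range_mulVecLin, LinearMap.range_eq_top.mpr hsurj, Submodule.map_top,
    LinearEquiv.range]

theorem orthodecomposable_col_iff {M : Matrix (Fin m) (Fin n) 𝕜} (hM : M * Mᴴ = 1) :
    Orthodecomposable 𝕜 (col M) ↔ ∃ S T : Set (Fin n), S.Nonempty ∧ T.Nonempty ∧
      Disjoint S T ∧ S ∪ T = Set.univ ∧ ∀ s ∈ S, ∀ t ∈ T, (Mᴴ * M) s t = 0 := by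
  simp_rw [orthodecomposable_iff_of_span_eq_top (span_range_col_eq_top_s8 hM), inner_col_col]

end Columns

theorem Matrix.conjTranspose_mul_self_apply_eq_neg_of_ne {𝕜 ι m k : Type*} [RCLike 𝕜]
    [Fintype m] [Fintype k] [DecidableEq ι] {F : Matrix m ι 𝕜} {G : Matrix k ι 𝕜}
    (hFG : Fᴴ * F + Gᴴ * G = 1) {s t : ι} (hst : s ≠ t) :
    (Fᴴ * F) s t = -(Gᴴ * G) s t :=
  eq_neg_of_add_eq_zero_left <| by rw [← Matrix.add_apply, hFG, Matrix.one_apply_ne hst]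

theorem naimark_orthodecomposable_general (𝕜 : Type*) [RCLike 𝕜] (N d : ℕ)
    (F : Matrix (Fin d) (Fin N) 𝕜) (G : Matrix (Fin (N - d)) (Fin N) 𝕜)
    (hF : F * F.conjTranspose = 1) (hG : G * G.conjTranspose = 1)
    (hFG : F.conjTranspose * F + G.conjTranspose * G = 1) :
    Orthodecomposable 𝕜 (col F) ↔ Orthodecomposable 𝕜 (col G) := by
  rw [orthodecomposable_col_iff hF, orthodecomposable_col_iff hG]
  refine exists₂_congr fun S T => and_congr_right' <| and_congr_right' <|
    and_congr_right fun hST => and_congr_right' ?_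
  refine forall₂_congr fun s hs => forall₂_congr fun t ht => ?_
  rw [Matrix.conjTranspose_mul_self_apply_eq_neg_of_ne hFG (hST.ne_of_mem hs ht), neg_eq_zero]

/-- A Parseval frame is orthodecomposable if and only if its Naimark complement is. -/
theorem naimark_orthodecomposable (𝕜 : Type*) [RCLike 𝕜] (N d : ℕ) (hd : 1 ≤ d) (hdN : d < N)
    (F : Matrix (Fin d) (Fin N) 𝕜) (G : Matrix (Fin (N - d)) (Fin N) 𝕜)
    (hF : F * F.conjTranspose = 1) (hG : G * G.conjTranspose = 1)
    (hFG : F.conjTranspose * F + G.conjTranspose * G = 1) :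
    Orthodecomposable 𝕜 (col F) ↔ Orthodecomposable 𝕜 (col G) :=
  naimark_orthodecomposable_general 𝕜 N d F G hF hG hFG
end
end

section
/- Let 𝔽 = ℝ or ℂ, let 1 ≤ d < N, let F = (f_1, …, f_N) be a Parseval frame in 𝔽^d, and let G = (g_1, …, g_N) be a Naimark complement of F in 𝔽^{N−d}. Then F is full spark (every d of the vectors f_1, …, f_N are linearly independent) if and only if G is full spark (every N−d of the vectors g_1, …, g_N are linearly independent). -/
/-!
If columns of `G` indexed by `t` (with `|t| = N - d`) are dependent, pick `c ≠ 0` supported on `t`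
with `G c = 0`. Then `Fᴴ F c = c`, so `Fᴴ (F c)` vanishes on the `d` indices outside `t`. There the
columns of `F` form a basis, hence `F c = 0` and `c = 0`. The converse is the same argument with
the roles of `F` and `G` exchanged.
-/

noncomputable section

namespace Matrix

variable {m n : Type*}

theorem exists_mulVec_eq_zero_of_not_linearIndependent {R : Type*} [CommRing R] [Fintype n]
    [DecidableEq n] (A : Matrix m n R) (s : Finset n)
    (h : ¬LinearIndependent R (fun j : s => fun i => A i j)) :
    ∃ c : n → R, c ≠ 0 ∧ (∀ j ∉ s, c j = 0) ∧ A *ᵥ c = 0 := by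
  obtain ⟨f, hf, i, hi, hfi⟩ := not_linearIndepOn_finset_iff (v := Aᵀ).1 h
  refine ⟨s.piecewise f 0, fun hc => hfi ?_, fun j hj => s.piecewise_eq_of_notMem _ _ hj, ?_⟩
  · simpa [hi] using congrFun hc i
  · rw [mulVec_eq_sum, ← hf, ← Finset.sum_subset s.subset_univ]
    · exact Finset.sum_congr rfl fun j hj => by
        rw [s.piecewise_eq_of_mem _ _ hj, op_smul_eq_smul]
    · intro j _ hj
      rw [s.piecewise_eq_of_notMem _ _ hj, Pi.zero_apply, MulOpposite.op_zero, zero_smul]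

theorem eq_zero_of_vecMul_apply_eq_zero {K : Type*} [Field K] [Fintype m] (A : Matrix m n K)
    (s : Finset n)
    (hs : LinearIndependent K (fun j : s => fun i => A i j)) (hcard : s.card = Fintype.card m)
    (y : m → K) (hy : ∀ j ∈ s, (y ᵥ* A) j = 0) : y = 0 := by
  have hspan : Submodule.span K (Set.range fun j : s => fun i => A i j) = ⊤ :=
    hs.span_eq_top_of_card_eq_finrank' (by simpa using hcard)
  have hdot : dotProductBilin K K y = 0 :=
    LinearMap.ext_on_range hspan fun j => hy j j.2
  exact dotProduct_eq_zero y fun w => LinearMap.congr_fun hdot w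

end Matrix

open Matrix in
theorem FullSpark.of_conjTranspose_mul_add_conjTranspose_mul_eq_one {𝕜 : Type*} [RCLike 𝕜]
    {d e N : ℕ} (hde : d + e = N) {F : Matrix (Fin d) (Fin N) 𝕜} {G : Matrix (Fin e) (Fin N) 𝕜}
    (hFG : Fᴴ * F + Gᴴ * G = 1) (hF : FullSpark F) : FullSpark G := by
  intro t ht
  by_contra hdep
  obtain ⟨c, hc0, hct, hGc⟩ := G.exists_mulVec_eq_zero_of_not_linearIndependent t hdep
  have hFFc : Fᴴ *ᵥ (F *ᵥ c) = c := by
    rw [mulVec_mulVec, eq_sub_of_add_eq hFG, sub_mulVec, one_mulVec, ← mulVec_mulVec, hGc,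
      mulVec_zero, sub_zero]
  have hstar : star (F *ᵥ c) ᵥ* F = star c := by
    simpa only [star_mulVec, conjTranspose_conjTranspose] using congrArg star hFFc
  have hcard : tᶜ.card = d := by
    rw [Finset.card_compl, ht, Fintype.card_fin]; omega
  have hFc : star (F *ᵥ c) = 0 :=
    F.eq_zero_of_vecMul_apply_eq_zero tᶜ (hF _ hcard) (by simpa using hcard) _ fun j hj => by
      rw [hstar, Pi.star_apply, hct j (Finset.mem_compl.1 hj), star_zero]
  exact hc0 (star_eq_zero.1 (by rw [← hstar, hFc, zero_vecMul]))

theorem naimark_fullSpark_general (𝕜 : Type*) [RCLike 𝕜] (N d : ℕ) (hdN : d < N)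
    (F : Matrix (Fin d) (Fin N) 𝕜) (G : Matrix (Fin (N - d)) (Fin N) 𝕜)
    (hFG : F.conjTranspose * F + G.conjTranspose * G = 1) :
    FullSpark F ↔ FullSpark G :=
  ⟨.of_conjTranspose_mul_add_conjTranspose_mul_eq_one (by omega) hFG,
    .of_conjTranspose_mul_add_conjTranspose_mul_eq_one (by omega) ((add_comm _ _).trans hFG)⟩

/-- A Parseval frame is full spark if and only if its Naimark complement is full spark. -/
theorem naimark_fullSpark (𝕜 : Type*) [RCLike 𝕜] (N d : ℕ) (hd : 1 ≤ d) (hdN : d < N)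
    (F : Matrix (Fin d) (Fin N) 𝕜) (G : Matrix (Fin (N - d)) (Fin N) 𝕜)
    (hF : F * F.conjTranspose = 1) (hG : G * G.conjTranspose = 1)
    (hFG : F.conjTranspose * F + G.conjTranspose * G = 1) :
    FullSpark F ↔ FullSpark G :=
  naimark_fullSpark_general 𝕜 N d hdN F G hFG
end
end
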